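/- If f : (0,∞) → ℝ is completely monotone and not identically zero, then f(t) > 0 for all t > 0. -/

import Mathlib

open Set
open scoped ContDiff

namespace CMaux

lemma smooth_iter (f : ℝ → ℝ) (hs : ContDiffOn ℝ ∞ f (Ioi 0)) (m : ℕ) :
    ContDiffOn ℝ ∞ (iteratedDeriv m f) (Ioi 0) := by
  induction m with
  | zero => simpa [iteratedDeriv_zero] using hs
  | succ n ih =>
    rw [iteratedDeriv_succ]
    exact ((contDiffOn_infty_iff_deriv_of_isOpen isOpen_Ioi).1 ih).2

lemma diffAt (f : ℝ → ℝ) (hs : ContDiffOn ℝ ∞ f (Ioi 0)) (m : ℕ) {t : ℝ} (ht : 0 < t) :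
    DifferentiableAt ℝ (iteratedDeriv m f) t :=
  ((smooth_iter f hs m).differentiableOn (by simp)).differentiableAt (isOpen_Ioi.mem_nhds ht)

lemma smooth_g (f : ℝ → ℝ) (hs : ContDiffOn ℝ ∞ f (Ioi 0)) :
    ContDiffOn ℝ ∞ (fun x => -deriv f x) (Ioi 0) := by
  have := (smooth_iter f hs 1).neg
  simpa [iteratedDeriv_one] using this

lemma iter_g (f : ℝ → ℝ) (k : ℕ) :
    iteratedDeriv k (fun x => -deriv f x) = fun x => -iteratedDeriv (k+1) f x := by
  funext x
  rw [iteratedDeriv_fun_neg k (deriv f) x]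
  rw [show iteratedDeriv (k+1) f = iteratedDeriv k (deriv f) from iteratedDeriv_succ' ..]

lemma sign_g (f : ℝ → ℝ) (hf : ∀ k t, 0 < t → 0 ≤ (-1:ℝ)^k * iteratedDeriv k f t) :
    ∀ k t, 0 < t → 0 ≤ (-1:ℝ)^k * iteratedDeriv k (fun x => -deriv f x) t := by
  intro k t ht
  rw [iter_g]
  have := hf (k+1) t ht
  rw [pow_succ] at this
  simpa using this

lemma nonneg (f : ℝ → ℝ) (hf : ∀ k t, 0 < t → 0 ≤ (-1:ℝ)^k * iteratedDeriv k f t)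
    {t : ℝ} (ht : 0 < t) : 0 ≤ f t := by simpa using hf 0 t ht

lemma anti (f : ℝ → ℝ) (hs : ContDiffOn ℝ ∞ f (Ioi 0))
    (hf : ∀ k t, 0 < t → 0 ≤ (-1:ℝ)^k * iteratedDeriv k f t) :
    AntitoneOn f (Ioi 0) := by
  apply antitoneOn_of_deriv_nonpos (convex_Ioi 0) hs.continuousOn
  · rw [interior_Ioi]; exact hs.differentiableOn (by simp)
  · intro x hx
    rw [interior_Ioi] at hx
    have := hf 1 x hx
    rw [iteratedDeriv_one] at this
    nlinarith

lemma lower : ∀ (n : ℕ) (f : ℝ → ℝ), ContDiffOn ℝ ∞ f (Ioi 0) →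
    (∀ k t, 0 < t → 0 ≤ (-1:ℝ)^k * iteratedDeriv k f t) →
    ∀ s t : ℝ, 0 < s → s ≤ t →
    (-1:ℝ)^n * iteratedDeriv n f t * (t - s)^n / n.factorial ≤ f s := by
  intro n
  induction n with
  | zero =>
    intro f hs hf s t h0 hst
    simpa using anti f hs hf (mem_Ioi.2 h0) (mem_Ioi.2 (lt_of_lt_of_le h0 hst)) hst
  | succ n ih =>
    intro f hs hf s t h0 hst
    rcases eq_or_lt_of_le hst with rfl | hlt
    · simpa using nonneg f hf h0
    have ht0 : (0:ℝ) < t := lt_trans h0 hlt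
    set c : ℝ := (-1:ℝ)^(n+1) * iteratedDeriv (n+1) f t with hc
    set F : ℝ → ℝ := fun x => f x - c * (t - x)^(n+1) / (n+1).factorial with hF
    have hfact : ((n+1).factorial : ℝ) = (n+1) * n.factorial := by
      exact_mod_cast Nat.factorial_succ n
    have hfactpos : (0:ℝ) < n.factorial := by exact_mod_cast n.factorial_pos
    have hderivF : ∀ x ∈ Ioo s t,
        HasDerivAt F (deriv f x + c * (t - x)^n / n.factorial) x := by
      intro x hx
      have hx0 : 0 < x := lt_trans h0 hx.1
      have hdf : HasDerivAt f (deriv f x) x := by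
        have := diffAt f hs 0 hx0
        rw [iteratedDeriv_zero] at this
        exact this.hasDerivAt
      have h1 : HasDerivAt (fun x : ℝ => t - x) (-1) x := by
        simpa using (hasDerivAt_id x).const_sub t
      have h2 : HasDerivAt (fun x : ℝ => (t - x)^(n+1))
          (((n:ℝ)+1) * (t - x)^n * (-1)) x := by
        simpa using h1.fun_pow (n+1)
      have h3 : HasDerivAt (fun x : ℝ => c * (t - x)^(n+1) / (n+1).factorial)
          (c * (((n:ℝ)+1) * (t - x)^n * (-1)) / (n+1).factorial) x :=
        (h2.const_mul c).div_const _
      have h4 := hdf.fun_sub h3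
      refine h4.congr_deriv ?_
      rw [hfact]
      field_simp
      ring
    have key : AntitoneOn F (Icc s t) := by
      apply antitoneOn_of_deriv_nonpos (convex_Icc s t)
      · apply ContinuousOn.sub
        · exact hs.continuousOn.mono (fun x hx => lt_of_lt_of_le h0 hx.1)
        · exact ((continuous_const.mul ((continuous_const.sub continuous_id).pow (n+1))).div_const _).continuousOn
      · rw [interior_Icc]
        intro x hx
        exact ((hderivF x hx).differentiableAt).differentiableWithinAt
      · rw [interior_Icc]
        intro x hx
        rw [(hderivF x hx).deriv]
        have hx0 : 0 < x := lt_trans h0 hx.1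
        have hIH := ih (fun y => -deriv f y) (smooth_g f hs) (sign_g f hf) x t hx0 (le_of_lt hx.2)
        rw [iter_g] at hIH
        have hcc : (-1:ℝ)^n * (-iteratedDeriv (n+1) f t) = c := by
          rw [hc, pow_succ]; ring
        rw [hcc] at hIH
        linarith
    have h1 : F t ≤ F s := key ⟨le_refl s, hst⟩ ⟨hst, le_refl t⟩ hst
    have h2 : 0 ≤ f t := nonneg f hf ht0
    have hFt : F t = f t := by simp [hF]
    have hFs : F s = f s - c * (t - s)^(n+1) / (n+1).factorial := rfl
    rw [hFt, hFs] at h1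
    have : c * (t - s)^(n+1) / (n+1).factorial ≤ f s := by linarith
    calc (-1:ℝ)^(n+1) * iteratedDeriv (n+1) f t * (t - s)^(n+1) / (n+1).factorial
        = c * (t - s)^(n+1) / (n+1).factorial := by rw [hc]
      _ ≤ f s := this

lemma zero_at (f : ℝ → ℝ) (hs : ContDiffOn ℝ ∞ f (Ioi 0)) {c : ℝ} (hc : 0 < c)
    (h0 : ∀ u, c < u → f u = 0) : f c = 0 := by
  have h1 : ContinuousWithinAt f (Ioi c) c :=
    (hs.continuousOn c (mem_Ioi.2 hc)).mono (fun x hx => lt_trans hc hx)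
  have h2 : Filter.Tendsto f (nhdsWithin c (Ioi c)) (nhds (f c)) := h1.tendsto
  have h3 : Filter.Tendsto f (nhdsWithin c (Ioi c)) (nhds 0) := by
    apply Filter.Tendsto.congr' _ tendsto_const_nhds
    filter_upwards [self_mem_nhdsWithin] with u hu
    exact (h0 u hu).symm
  exact tendsto_nhds_unique h2 h3

lemma gzero (f : ℝ → ℝ) {c : ℝ} (h0 : ∀ u, c < u → f u = 0) :
    ∀ u, c < u → (fun x => -deriv f x) u = 0 := by
  intro u hu
  have h : f =ᶠ[nhds u] (fun _ => (0:ℝ)) := by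
    filter_upwards [isOpen_Ioi.mem_nhds (mem_Ioi.2 hu)] with v hv
    exact h0 v hv
  simp [h.deriv_eq]

lemma upper : ∀ (n : ℕ) (f : ℝ → ℝ), ContDiffOn ℝ ∞ f (Ioi 0) →
    (∀ k t, 0 < t → 0 ≤ (-1:ℝ)^k * iteratedDeriv k f t) →
    ∀ c : ℝ, 0 < c → (∀ u, c < u → f u = 0) →
    ∀ s : ℝ, 0 < s → s ≤ c →
    f s ≤ (-1:ℝ)^n * iteratedDeriv n f s * (c - s)^n / n.factorial := by
  intro n
  induction n with
  | zero =>
    intro f hs hf c hc h0 s h0s hsc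
    simp
  | succ n ih =>
    intro f hs hf c hc h0 s h0s hsc
    have hfc : f c = 0 := zero_at f hs hc h0
    rcases eq_or_lt_of_le hsc with rfl | hlt
    · simp only [sub_self, zero_pow (Nat.succ_ne_zero n), mul_zero, zero_div]
      exact le_of_eq hfc
    have hfact : ((n+1).factorial : ℝ) = (n+1) * n.factorial := by
      exact_mod_cast Nat.factorial_succ n
    have hfactpos : (0:ℝ) < n.factorial := by exact_mod_cast n.factorial_pos
    set G : ℝ → ℝ := fun x =>
      (-1:ℝ)^(n+1) * iteratedDeriv (n+1) f x * (c - x)^(n+1) / (n+1).factorial - f x with hGdef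
    have hderivG : ∀ x ∈ Ioo s c,
        HasDerivAt G
          (((-1:ℝ)^(n+1) * iteratedDeriv (n+2) f x * (c - x)^(n+1)
            + ((-1:ℝ)^(n+1) * iteratedDeriv (n+1) f x) * (((n:ℝ)+1) * (c - x)^n * (-1)))
            / (n+1).factorial - deriv f x) x := by
      intro x hx
      have hx0 : 0 < x := lt_trans h0s hx.1
      have hdf : HasDerivAt f (deriv f x) x := by
        have := diffAt f hs 0 hx0
        rw [iteratedDeriv_zero] at this
        exact this.hasDerivAt
      have hD : HasDerivAt (iteratedDeriv (n+1) f) (iteratedDeriv (n+2) f x) x := by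
        have h := (diffAt f hs (n+1) hx0).hasDerivAt
        rwa [show deriv (iteratedDeriv (n+1) f) x = iteratedDeriv (n+2) f x from
          (congrFun (iteratedDeriv_succ (n := n+1)) x).symm] at h
      have h1 : HasDerivAt (fun x : ℝ => c - x) (-1) x := by
        simpa using (hasDerivAt_id x).const_sub c
      have h2 : HasDerivAt (fun x : ℝ => (c - x)^(n+1))
          (((n:ℝ)+1) * (c - x)^n * (-1)) x := by
        simpa using h1.fun_pow (n+1)
      exact (((hD.const_mul ((-1:ℝ)^(n+1))).mul h2).div_const _).sub hdf
    have key : AntitoneOn G (Icc s c) := by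
      apply antitoneOn_of_deriv_nonpos (convex_Icc s c)
      · apply ContinuousOn.sub
        · apply ContinuousOn.div_const
          apply ContinuousOn.mul
          · exact (continuousOn_const.mul
              ((smooth_iter f hs (n+1)).continuousOn.mono
                (fun x hx => lt_of_lt_of_le h0s hx.1)))
          · exact ((continuous_const.sub continuous_id).pow (n+1)).continuousOn
        · exact hs.continuousOn.mono (fun x hx => lt_of_lt_of_le h0s hx.1)
      · rw [interior_Icc]
        intro x hx
        exact ((hderivG x hx).differentiableAt).differentiableWithinAt
      · rw [interior_Icc]
        intro x hx
        rw [(hderivG x hx).deriv]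
        have hx0 : 0 < x := lt_trans h0s hx.1
        have hIH := ih (fun y => -deriv f y) (smooth_g f hs) (sign_g f hf) c hc
          (gzero f h0) x hx0 (le_of_lt hx.2)
        rw [iter_g] at hIH
        set P : ℝ := (-1:ℝ)^(n+2) * iteratedDeriv (n+2) f x with hP
        set Q : ℝ := (-1:ℝ)^(n+1) * iteratedDeriv (n+1) f x with hQ
        have hP0 : 0 ≤ P := hf (n+2) x hx0
        have hQIH : -deriv f x ≤ Q * (c - x)^n / n.factorial := by
          have : (-1:ℝ)^n * (-iteratedDeriv (n+1) f x) = Q := by rw [hQ, pow_succ]; ring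
          calc -deriv f x = (fun y => -deriv f y) x := rfl
            _ ≤ (-1:ℝ)^n * (-iteratedDeriv (n+1) f x) * (c - x)^n / n.factorial := hIH
            _ = Q * (c - x)^n / n.factorial := by rw [this]
        have hneg : (-1:ℝ)^(n+1) * iteratedDeriv (n+2) f x = -P := by
          rw [hP, pow_succ]; ring
        rw [hneg]
        have hrx : (0:ℝ) ≤ c - x := by linarith [hx.2]
        have e : (-P * (c - x)^(n+1) + Q * (((n:ℝ)+1) * (c - x)^n * (-1))) / (n+1).factorial
            = -(P * (c - x)^(n+1)) / (((n:ℝ)+1) * n.factorial) - Q * (c - x)^n / n.factorial := by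
          rw [hfact]
          have hn1 : ((n:ℝ)+1) ≠ 0 := by positivity
          field_simp
          ring
        rw [e]
        have hterm : -(P * (c - x)^(n+1)) / (((n:ℝ)+1) * n.factorial) ≤ 0 := by
          apply div_nonpos_of_nonpos_of_nonneg
          · have : 0 ≤ P * (c - x)^(n+1) := mul_nonneg hP0 (pow_nonneg hrx _)
            linarith
          · positivity
        linarith
    have h1 : G c ≤ G s := key ⟨le_refl s, hsc⟩ ⟨hsc, le_refl c⟩ hsc
    have hGc : G c = 0 := by
      simp [hGdef, hfc, zero_pow (Nat.succ_ne_zero n)]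
    have hGs : G s = (-1:ℝ)^(n+1) * iteratedDeriv (n+1) f s * (c - s)^(n+1) / (n+1).factorial
        - f s := rfl
    rw [hGc, hGs] at h1
    linarith

lemma step (f : ℝ → ℝ) (hs : ContDiffOn ℝ ∞ f (Ioi 0))
    (hf : ∀ k t, 0 < t → 0 ≤ (-1:ℝ)^k * iteratedDeriv k f t)
    {c : ℝ} (hc : 0 < c) (h0 : ∀ u, c < u → f u = 0) :
    ∀ s, 2*c/3 < s → f s = 0 := by
  intro s hsgt
  have hs0 : 0 < s := lt_of_le_of_lt (by positivity) hsgt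
  rcases lt_or_ge c s with hcs | hsc
  · exact h0 s hcs
  set r : ℝ := (c - s) / (s/2) with hr
  have hr0 : 0 ≤ r := div_nonneg (by linarith) (by linarith)
  have hr1 : r < 1 := by
    rw [hr, div_lt_one (by linarith)]
    linarith
  have hcsr : c - s = (s/2) * r := by
    rw [hr]
    field_simp
  have key : ∀ n : ℕ, f s ≤ f (s/2) * r^n := by
    intro n
    have hfactpos : (0:ℝ) < n.factorial := by exact_mod_cast n.factorial_pos
    have hu := upper n f hs hf c hc h0 s hs0 hsc
    have hl := lower n f hs hf (s/2) s (by linarith) (by linarith)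
    have hl' : (-1:ℝ)^n * iteratedDeriv n f s * (s/2)^n / n.factorial ≤ f (s/2) := by
      have : s - s/2 = s/2 := by ring
      rwa [this] at hl
    calc f s ≤ (-1:ℝ)^n * iteratedDeriv n f s * (c - s)^n / n.factorial := hu
      _ = ((-1:ℝ)^n * iteratedDeriv n f s * (s/2)^n / n.factorial) * r^n := by
          rw [hcsr, mul_pow]; ring
      _ ≤ f (s/2) * r^n := mul_le_mul_of_nonneg_right hl' (pow_nonneg hr0 n)
  have hlim : Filter.Tendsto (fun n : ℕ => f (s/2) * r^n) Filter.atTop (nhds 0) := by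
    simpa using (tendsto_pow_atTop_nhds_zero_of_lt_one hr0 hr1).const_mul (f (s/2))
  have hle : f s ≤ 0 := ge_of_tendsto' hlim key
  exact le_antisymm hle (nonneg f hf hs0)

end CMaux

/-- A completely monotone function on `(0,∞)` that is not identically zero is strictly
positive everywhere on `(0,∞)`. -/
theorem completely_monotone_pos (f : ℝ → ℝ)
    (hf_smooth : ContDiffOn ℝ (⊤ : ℕ∞) f (Set.Ioi 0))
    (hf : ∀ (k : ℕ) (t : ℝ), 0 < t → 0 ≤ (-1 : ℝ) ^ k * iteratedDeriv k f t)
    (hne : ∃ t : ℝ, 0 < t ∧ f t ≠ 0) :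
    ∀ t : ℝ, 0 < t → 0 < f t := by
  have hs : ContDiffOn ℝ ∞ f (Set.Ioi 0) := hf_smooth.of_le (by simp)
  intro t ht
  rcases (CMaux.nonneg f hf ht).lt_or_eq with h | h
  · exact h
  exfalso
  -- f t = 0, show f vanishes identically, contradicting hne
  have base : ∀ u, t < u → f u = 0 := by
    intro u hu
    have h1 : f u ≤ f t := CMaux.anti f hs hf (mem_Ioi.2 ht) (mem_Ioi.2 (lt_trans ht hu)) (le_of_lt hu)
    have h2 : 0 ≤ f u := CMaux.nonneg f hf (lt_trans ht hu)
    linarith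
  have claim : ∀ n : ℕ, ∀ u, (2/3:ℝ)^n * t < u → f u = 0 := by
    intro n
    induction n with
    | zero => simpa using base
    | succ n ih =>
      have hcn : 0 < (2/3:ℝ)^n * t := by positivity
      have := CMaux.step f hs hf hcn ih
      intro u hu
      apply this u
      calc 2 * ((2/3:ℝ)^n * t) / 3 = (2/3:ℝ)^(n+1) * t := by ring
        _ < u := hu
  obtain ⟨t', ht', hft'⟩ := hne
  apply hft'
  obtain ⟨n, hn⟩ : ∃ n : ℕ, (2/3:ℝ)^n < t'/t := by
    apply exists_pow_lt_of_lt_one (by positivity)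
    norm_num
  exact claim n t' (by rw [← lt_div_iff₀ ht] at *; linarith [hn])
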